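/- arXiv:1711.03655 — 2 statements merged into one kernel-verified Lean document; each statement's English description precedes it below -/
import Mathlib

section
/- Let A be a Noetherian local ring with minimal primes p_1, ..., p_s and let Z be a closed subset of Spec(A). If Spec(A) \ Z is disconnected, then there exist subsets S and T of {1,...,s} with S ∪ T = {1,...,s}, such that neither ⋂_{i∈S} p_i nor ⋂_{j∈T} p_j is nilpotent and V(⋂_{i∈S} p_i + ⋂_{j∈T} p_j) ⊆ Z. -/
open PrimeSpectrum

/-- Let `A` be a Noetherian local ring with minimal primes `p 1, ..., p s`, and let
`Z` be a closed subset of `Spec A`.  If `Spec A \ Z` is disconnected, then there are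
subsets `S`, `T` of `{1, ..., s}` with `S ∪ T = {1, ..., s}` such that neither
`⋂_{i ∈ S} p i` nor `⋂_{j ∈ T} p j` is nilpotent, and
`V(⋂_{i ∈ S} p i + ⋂_{j ∈ T} p j) ⊆ Z`. -/
theorem exists_partition_minimalPrimes_of_disconnected
    (A : Type*) [CommRing A] [IsLocalRing A] [IsNoetherianRing A]
    (s : ℕ) (p : Fin s → Ideal A)
    (hmem : ∀ i, p i ∈ minimalPrimes A)
    (hsurj : ∀ q ∈ minimalPrimes A, ∃ i, p i = q)
    (Z : Set (PrimeSpectrum A)) (hZ : IsClosed Z)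
    (hdisc : ¬ IsPreconnected Zᶜ) :
    ∃ S T : Finset (Fin s), S ∪ T = Finset.univ ∧
      ¬ (⨅ i ∈ S, p i) ≤ nilradical A ∧
      ¬ (⨅ j ∈ T, p j) ≤ nilradical A ∧
      zeroLocus (((⨅ i ∈ S, p i) + ⨅ j ∈ T, p j : Ideal A) : Set A) ⊆ Z := by
  classical
  have hprime : ∀ i, (p i).IsPrime := fun i => (hmem i).1.1
  rw [IsPreconnected] at hdisc
  push_neg at hdisc
  obtain ⟨u, v, hu, hv, hcover, hnu, hnv, hempty⟩ := hdisc
  -- replace u v by intersections with Zᶜ: these are disjoint opens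
  set u' : Set (PrimeSpectrum A) := u ∩ Zᶜ with hu'def
  set v' : Set (PrimeSpectrum A) := v ∩ Zᶜ with hv'def
  have hu' : IsOpen u' := hu.inter hZ.isOpen_compl
  have hv' : IsOpen v' := hv.inter hZ.isOpen_compl
  have hdisj : Disjoint u' v' := by
    rw [Set.disjoint_iff_inter_eq_empty]
    rw [← hempty]
    ext x; simp [hu'def, hv'def]; tauto
  have hcover' : Zᶜ ⊆ u' ∪ v' := fun x hx => by
    rcases hcover hx with h | h
    · exact Or.inl ⟨h, hx⟩
    · exact Or.inr ⟨h, hx⟩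
  -- each zeroLocus (p i) ∩ Zᶜ is preconnected
  have hconn : ∀ i, IsPreconnected (zeroLocus (p i : Set A) ∩ Zᶜ) := by
    intro i
    have hirr : IsIrreducible (zeroLocus (p i : Set A)) := by
      rw [isIrreducible_zeroLocus_iff]
      rw [(hprime i).radical]; exact hprime i
    have : IsPreirreducible (zeroLocus (p i : Set A) ∩ Zᶜ) := by
      rintro a b ha hb ⟨x, ⟨hx1, hx2⟩, hxa⟩ ⟨y, ⟨hy1, hy2⟩, hyb⟩
      obtain ⟨z, hz1, hz2, hz3⟩ := hirr.2 (a ∩ Zᶜ) (b ∩ Zᶜ)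
        (ha.inter hZ.isOpen_compl) (hb.inter hZ.isOpen_compl)
        ⟨x, hx1, hxa, hx2⟩ ⟨y, hy1, hyb, hy2⟩
      exact ⟨z, ⟨hz1, hz2.2⟩, hz2.1, hz3.1⟩
    exact this.isPreconnected
  set S : Finset (Fin s) := Finset.univ.filter
    (fun i => zeroLocus (p i : Set A) ∩ Zᶜ ⊆ u') with hSdef
  set T : Finset (Fin s) := Finset.univ.filter
    (fun i => zeroLocus (p i : Set A) ∩ Zᶜ ⊆ v') with hTdef
  have hST : S ∪ T = Finset.univ := by
    ext i
    simp only [Finset.mem_union, hSdef, hTdef, Finset.mem_filter, Finset.mem_univ, true_and,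
      iff_true]
    have := (hconn i).subset_or_subset hu' hv' hdisj
      ((Set.inter_subset_right).trans hcover')
    exact this
  -- inf over a Finset membership equals Finset.inf
  have hinf : ∀ (F : Finset (Fin s)), (⨅ i ∈ F, p i) = F.inf p := by
    intro F; rw [Finset.inf_eq_iInf]
  -- key: a point in Zᶜ whose prime contains ⋂_{i∈F} p i with F ⊆ "subset of w" lies in w
  have hkey : ∀ (F : Finset (Fin s)) (w : Set (PrimeSpectrum A)),
      (∀ i ∈ F, zeroLocus (p i : Set A) ∩ Zᶜ ⊆ w) →
      ∀ q : PrimeSpectrum A, q ∈ Zᶜ → (⨅ i ∈ F, p i) ≤ q.asIdeal → q ∈ w := by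
    intro F w hF q hq hle
    rw [hinf] at hle
    obtain ⟨i, hiF, hile⟩ := (q.isPrime.inf_le').mp hle
    exact hF i hiF ⟨hile, hq⟩
  -- nontriviality
  have hnn : ∀ (F : Finset (Fin s)) (w : Set (PrimeSpectrum A)),
      (∀ i ∈ F, zeroLocus (p i : Set A) ∩ Zᶜ ⊆ w) →
      ∀ w₂ : Set (PrimeSpectrum A), Disjoint w w₂ → (Zᶜ ∩ w₂).Nonempty →
      ¬ (⨅ i ∈ F, p i) ≤ nilradical A := by
    rintro F w hF w₂ hdisj2 ⟨q, hqZ, hqw⟩ hle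
    have hle' : (⨅ i ∈ F, p i) ≤ q.asIdeal :=
      hle.trans (nilradical_le_prime q.asIdeal)
    have : q ∈ w := hkey F w hF q hqZ hle'
    exact hdisj2.ne_of_mem this hqw rfl
  refine ⟨S, T, hST, ?_, ?_, ?_⟩
  · refine hnn S u' (fun i hi => by simpa [hSdef] using (Finset.mem_filter.mp hi).2) v' hdisj ?_
    obtain ⟨q, hq1, hq2⟩ := hnv
    exact ⟨q, hq1, hq2, hq1⟩
  · refine hnn T v' (fun i hi => by simpa [hTdef] using (Finset.mem_filter.mp hi).2) u' hdisj.symm ?_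
    obtain ⟨q, hq1, hq2⟩ := hnu
    exact ⟨q, hq1, hq2, hq1⟩
  · intro q hq
    by_contra hqZ
    rw [mem_zeroLocus, ← Ideal.span_le, Ideal.span_eq] at hq
    have h1 : (⨅ i ∈ S, p i) ≤ q.asIdeal := le_trans le_sup_left hq
    have h2 : (⨅ j ∈ T, p j) ≤ q.asIdeal := le_trans le_sup_right hq
    have hqu : q ∈ u' := hkey S u'
      (fun i hi => by simpa [hSdef] using (Finset.mem_filter.mp hi).2) q hqZ h1
    have hqv : q ∈ v' := hkey T v'
      (fun i hi => by simpa [hTdef] using (Finset.mem_filter.mp hi).2) q hqZ h2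
    exact hdisj.ne_of_mem hqu hqv rfl
end

section
/- Let (A, n) be an equidimensional complete Noetherian local ring of dimension d ≥ 3, let Ξ(A) be the set of ideals p + q where p, q range over minimal primes of A with √(p+q) ≠ n, and fix x ∈ n lying in no minimal prime of any ideal in Ξ(A). Then for any 1 ≤ t ≤ d−2, if Γ_t(A/(x)) is connected, then Γ_t(A) is connected. -/
open IsLocalRing PrimeSpectrum CategoryTheory

noncomputable section

/-- Height of an ideal: the infimum of the heights of the primes containing it. -/
noncomputable def Ideal.height' {A : Type*} [CommRing A] (I : Ideal A) : ℕ∞ :=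
  ⨅ p ∈ {p : PrimeSpectrum A | I ≤ p.asIdeal}, Order.height p

/-- A ring is equidimensional if `dim (A/p) = dim A` for every minimal prime `p`. -/
def IsEquidimensional (A : Type*) [CommRing A] : Prop :=
  ∀ p ∈ minimalPrimes A, ringKrullDim (A ⧸ p) = ringKrullDim A

/-- The graph `Γ_t(A)` on the minimal primes of `A`, with an edge between distinct
minimal primes `p ≠ q` iff `ht (p + q) ≤ t`. -/
def Gamma (A : Type*) [CommRing A] (t : ℕ) :
    SimpleGraph {p : Ideal A // p ∈ minimalPrimes A} where
  Adj p q := p ≠ q ∧ Ideal.height' (p.1 ⊔ q.1) ≤ (t : ℕ∞)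
  symm := by
    constructor
    intro p q h
    exact ⟨h.1.symm, by rw [sup_comm]; exact h.2⟩
  loopless := ⟨fun p h => h.1 rfl⟩

/-- The connectedness dimension of `A`: the minimal dimension of a closed subset
`Z = V(J)` of `Spec A` such that `Spec A \ Z` is disconnected (the empty space counting
as disconnected). -/
noncomputable def connDim (A : Type*) [CommRing A] : WithBot ℕ∞ :=
  sInf {d | ∃ J : Ideal A, ringKrullDim (A ⧸ J) = d ∧
    ¬ IsConnected ((PrimeSpectrum.zeroLocus (J : Set A))ᶜ)}

/-- The set `Ξ(A)` of ideals `p + q`, for `p, q` minimal primes of `A` with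
`√(p + q)` different from the maximal ideal. -/
def Xi (A : Type*) [CommRing A] [IsLocalRing A] : Set (Ideal A) :=
  {I | ∃ p ∈ minimalPrimes A, ∃ q ∈ minimalPrimes A,
    I = p ⊔ q ∧ (p ⊔ q).radical ≠ maximalIdeal A}

/-! Send each minimal prime `P` of `A ⧸ (x)` to a minimal prime `ψ P` of `A` contained in its
contraction. If `P ~ P'` in `Γ_t(A ⧸ (x))`, some prime of height `≤ t` contains `P + P'`; its
contraction `V` contains `x` and has height `≤ t + 1 < d`, so `V ≠ n`. Hence `ψ P + ψ P' ∈ Ξ(A)`,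
and a minimal prime of it inside `V` avoids `x`, so lies strictly below `V` and has height `≤ t`:
`ψ` maps each edge to an edge or collapses it.

`ψ` is onto: for a minimal prime `p` of `A`, Krull's principal ideal theorem in `A ⧸ p` shows
that a minimal prime `Q` of `p + (x)` is not `n` (as `dim A ⧸ p = d ≥ 3`) and that no prime lies
strictly between `p` and `Q`. Taking `P` a minimal prime of `(x)` inside `Q`, the minimal primes
of `p + ψ P` inside `Q` avoid `x`, so they equal `p`, whence `ψ P = p`. -/

namespace Ideal

variable {R : Type*} [CommRing R]

theorem height'_eq_height (I : Ideal R) : I.height' = I.height := by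
  refine le_antisymm ?_ ?_
  · rw [height_eq_inf_minimalPrimes]
    refine le_iInf₂ fun J hJ => ?_
    calc I.height' ≤ Order.height (⟨J, hJ.isPrime⟩ : PrimeSpectrum R) := biInf_le _ hJ.1.2
      _ = J.height := (PrimeSpectrum.height_eq_orderHeight _).symm
  · refine le_iInf₂ fun p hp => ?_
    rw [← p.height_eq_orderHeight]
    exact height_mono hp

theorem exists_isPrime_le_height_le {I : Ideal R} {n : ℕ} (h : I.height ≤ n) :
    ∃ P, P.IsPrime ∧ I ≤ P ∧ P.height ≤ n := by
  obtain ⟨m, hm, hmn⟩ := ENat.le_natCast_iff.mp h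
  obtain ⟨P, hP, hIP, hPm⟩ := exists_isPrime_height_eq hm
  exact ⟨P, hP, hIP, hPm ▸ by exact_mod_cast hmn⟩

theorem map_mk_lt_map_mk {I J K : Ideal R} (hJ : I ≤ J) (hK : I ≤ K) (h : J < K) :
    J.map (Quotient.mk I) < K.map (Quotient.mk I) :=
  (map_mono h.le).lt_of_ne fun he => h.ne <| by rw [← comap_map_mk hJ, he, comap_map_mk hK]

variable [IsNoetherianRing R]

theorem eq_of_le_of_lt_of_mem_minimalPrimes_sup_span_singleton {p Q Z : Ideal R} [p.IsPrime]
    [Z.IsPrime] {x : R} (hQ : Q ∈ (p ⊔ span {x}).minimalPrimes) (hpZ : p ≤ Z) (hZQ : Z < Q) :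
    Z = p := by
  have := hQ.isPrime
  have : (Q.map (Quotient.mk p)).IsPrime := isPrime_map_quotientMk_of_isPrime (hpZ.trans hZQ.le)
  have : (Z.map (Quotient.mk p)).IsPrime := isPrime_map_quotientMk_of_isPrime hpZ
  have hZ1 : (Z.map (Quotient.mk p)).height + 1 ≤ 0 + 1 :=
    (height_add_one_le_of_lt_of_isPrime (map_mk_lt_map_mk hpZ (hpZ.trans hZQ.le) hZQ)).trans
      ((map_height_le_one_of_mem_minimalPrimes hQ).trans_eq (zero_add 1).symm)
  have hZ0 := nonpos_iff_eq_zero.mp ((ENat.add_le_add_iff_right ENat.one_ne_top).mp hZ1)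
  rw [height_eq_zero_iff_eq_bot, map_eq_bot_iff_le_ker, mk_ker] at hZ0
  exact le_antisymm hZ0 hpZ

theorem ringKrullDim_quotient_le_one_of_mem_minimalPrimes [IsLocalRing R] {I : Ideal R} {x : R}
    (h : maximalIdeal R ∈ (I ⊔ span {x}).minimalPrimes) : ringKrullDim (R ⧸ I) ≤ 1 := by
  rw [ringKrullDim_le_iff_height_le]
  intro P hP
  have hPle : P ≤ (maximalIdeal R).map (Quotient.mk I) := by
    rw [← map_comap_of_surjective _ Quotient.mk_surjective P]
    exact map_mono (le_maximalIdeal (hP.comap _).ne_top)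
  exact_mod_cast (height_mono hPle).trans (map_height_le_one_of_mem_minimalPrimes h)

end Ideal

namespace SimpleGraph

variable {V W : Type*} {G : SimpleGraph V} {H : SimpleGraph W}

theorem Reachable.map_of_adj {f : V → W}
    (hf : ∀ ⦃v w⦄, G.Adj v w → f v = f w ∨ H.Adj (f v) (f w)) {v w : V}
    (h : G.Reachable v w) : H.Reachable (f v) (f w) := by
  obtain ⟨p⟩ := h
  induction p with
  | nil => rfl
  | cons hadj _ ih =>
    rcases hf hadj with heq | hadj'
    · exact heq ▸ ih
    · exact hadj'.reachable.trans ih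

theorem Connected.of_surjective_of_adj (hG : G.Connected) {f : V → W}
    (hsurj : Function.Surjective f)
    (hf : ∀ ⦃v w⦄, G.Adj v w → f v = f w ∨ H.Adj (f v) (f w)) : H.Connected where
  preconnected := hsurj.forall₂.mpr fun v w => (hG.preconnected v w).map_of_adj hf
  nonempty := hG.nonempty.map f

end SimpleGraph

theorem gamma_adj_iff {A : Type*} [CommRing A] {t : ℕ}
    {p q : {p : Ideal A // p ∈ minimalPrimes A}} :
    (Gamma A t).Adj p q ↔ p ≠ q ∧ (p.1 ⊔ q.1).height ≤ t := by
  rw [← Ideal.height'_eq_height]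
  rfl

def minimalPrimeBelow {R S : Type*} [CommRing R] [CommRing S] (f : R →+* S)
    (P : {P : Ideal S // P ∈ minimalPrimes S}) : {p : Ideal R // p ∈ minimalPrimes R} :=
  have := P.2.isPrime.comap f
  ⟨_, (Ideal.exists_minimalPrimes_le (bot_le : ⊥ ≤ P.1.comap f)).choose_spec.1⟩

theorem minimalPrimeBelow_le {R S : Type*} [CommRing R] [CommRing S] (f : R →+* S)
    (P : {P : Ideal S // P ∈ minimalPrimes S}) : (minimalPrimeBelow f P).1 ≤ P.1.comap f :=
  have := P.2.isPrime.comap f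
  (Ideal.exists_minimalPrimes_le (bot_le : ⊥ ≤ P.1.comap f)).choose_spec.2

section Local

variable {A : Type*} [CommRing A] [IsLocalRing A] {x : A}

theorem exists_mem_minimalPrimes_sup_lt (hxXi : ∀ I ∈ Xi A, ∀ P ∈ I.minimalPrimes, x ∉ P)
    {p q : Ideal A} (hp : p ∈ minimalPrimes A) (hq : q ∈ minimalPrimes A) {V : Ideal A}
    [V.IsPrime] (hle : p ⊔ q ≤ V) (hxV : x ∈ V) (hV : V ≠ maximalIdeal A) :
    ∃ Z ∈ (p ⊔ q).minimalPrimes, Z < V := by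
  have hXi : p ⊔ q ∈ Xi A := ⟨p, hp, q, hq, rfl, fun h => hV <|
    le_antisymm (le_maximalIdeal Ideal.IsPrime.ne_top') (h ▸ ‹V.IsPrime›.radical_le_iff.mpr hle)⟩
  obtain ⟨Z, hZ, hZV⟩ := Ideal.exists_minimalPrimes_le hle
  exact ⟨Z, hZ, hZV.lt_of_ne fun h => hxXi _ hXi Z hZ (h ▸ hxV)⟩

variable [IsNoetherianRing A]

theorem minimalPrimeBelow_eq_or_adj (hxXi : ∀ I ∈ Xi A, ∀ P ∈ I.minimalPrimes, x ∉ P) {t : ℕ}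
    (ht : (t : ℕ∞) + 1 < (maximalIdeal A).height)
    {v w : {P : Ideal (A ⧸ Ideal.span {x}) // P ∈ minimalPrimes (A ⧸ Ideal.span {x})}}
    (hvw : (Gamma (A ⧸ Ideal.span {x}) t).Adj v w) :
    minimalPrimeBelow (Ideal.Quotient.mk _) v = minimalPrimeBelow (Ideal.Quotient.mk _) w ∨
      (Gamma A t).Adj (minimalPrimeBelow (Ideal.Quotient.mk _) v)
        (minimalPrimeBelow (Ideal.Quotient.mk _) w) := by
  set f := Ideal.Quotient.mk (Ideal.span {x})
  rw [or_iff_not_imp_left, gamma_adj_iff]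
  refine fun hne => ⟨hne, ?_⟩
  obtain ⟨P, hP, hvwP, hPt⟩ := Ideal.exists_isPrime_le_height_le (gamma_adj_iff.mp hvw).2
  have hxV : x ∈ P.comap f := by
    simp [f, Ideal.Quotient.eq_zero_iff_mem.mpr (Ideal.mem_span_singleton_self x)]
  have hVt : (P.comap f).height ≤ t + 1 :=
    calc (P.comap f).height ≤ ((P.comap f).map f).height + 1 :=
          Ideal.height_le_height_add_one_of_mem hxV
      _ = P.height + 1 := by rw [Ideal.map_comap_of_surjective _ Ideal.Quotient.mk_surjective]
      _ ≤ t + 1 := by gcongr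
  have hle : (minimalPrimeBelow f v).1 ⊔ (minimalPrimeBelow f w).1 ≤ P.comap f :=
    sup_le ((minimalPrimeBelow_le f v).trans (Ideal.comap_mono (le_sup_left.trans hvwP)))
      ((minimalPrimeBelow_le f w).trans (Ideal.comap_mono (le_sup_right.trans hvwP)))
  have hVmax : P.comap f ≠ maximalIdeal A := fun h => (hVt.trans_lt (h ▸ ht)).false
  obtain ⟨Z, hZ, hZV⟩ := exists_mem_minimalPrimes_sup_lt hxXi (minimalPrimeBelow f v).2
    (minimalPrimeBelow f w).2 hle hxV hVmax
  have := hZ.isPrime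
  calc _ ≤ Z.height := Ideal.height_mono hZ.1.2
    _ ≤ t := (ENat.add_le_add_iff_right ENat.one_ne_top).mp
      ((Ideal.height_add_one_le_of_lt_of_isPrime hZV).trans hVt)

theorem minimalPrimeBelow_surjective (hxXi : ∀ I ∈ Xi A, ∀ P ∈ I.minimalPrimes, x ∉ P)
    (hx : x ∈ maximalIdeal A) (hdim : ∀ p ∈ minimalPrimes A, 1 < ringKrullDim (A ⧸ p)) :
    Function.Surjective (minimalPrimeBelow (Ideal.Quotient.mk (Ideal.span {x}))) := by
  set f := Ideal.Quotient.mk (Ideal.span {x})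
  rintro ⟨p, hp⟩
  have := hp.isPrime
  obtain ⟨Q, hQ, -⟩ := Ideal.exists_minimalPrimes_le
    (sup_le (le_maximalIdeal Ideal.IsPrime.ne_top')
      ((Ideal.span_singleton_le_iff_mem _).mpr hx) : p ⊔ Ideal.span {x} ≤ maximalIdeal A)
  have := hQ.isPrime
  have hQmax : Q ≠ maximalIdeal A := fun h =>
    (hdim p hp).not_ge (Ideal.ringKrullDim_quotient_le_one_of_mem_minimalPrimes (h ▸ hQ))
  have hxQ : x ∈ Q := hQ.1.2 (Ideal.mem_sup_right (Ideal.mem_span_singleton_self x))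
  obtain ⟨Q', hQ', hQ'Q⟩ :=
    Ideal.exists_minimalPrimes_le ((Ideal.span_singleton_le_iff_mem _).mpr hxQ)
  rw [Ideal.minimalPrimes_eq_comap] at hQ'
  obtain ⟨P, hP, rfl⟩ := hQ'
  refine ⟨⟨P, hP⟩, ?_⟩
  set r := minimalPrimeBelow f ⟨P, hP⟩
  have hle : p ⊔ r.1 ≤ Q :=
    sup_le (le_sup_left.trans hQ.1.2) ((minimalPrimeBelow_le f _).trans hQ'Q)
  obtain ⟨Z, hZ, hZQ⟩ := exists_mem_minimalPrimes_sup_lt hxXi hp r.2 hle hxQ hQmax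
  have := hZ.isPrime
  have hZp : Z = p := Ideal.eq_of_le_of_lt_of_mem_minimalPrimes_sup_span_singleton hQ
    (le_sup_left.trans hZ.1.2) hZQ
  have hrp : r.1 ≤ p := hZp ▸ le_sup_right.trans hZ.1.2
  exact Subtype.ext (le_antisymm hrp (hp.2 r.2.1 hrp))

end Local

theorem gamma_connected_of_gamma_quotient_connected_general
    (A : Type*) [CommRing A] [IsLocalRing A] [IsNoetherianRing A]
    (hequi : IsEquidimensional A) (d : ℕ) (hd : 3 ≤ d)
    (hdim : ringKrullDim A = (d : ℕ))
    (x : A) (hx : x ∈ maximalIdeal A)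
    (hxXi : ∀ I ∈ Xi A, ∀ P ∈ I.minimalPrimes, x ∉ P)
    (t : ℕ) (htd : t ≤ d - 2)
    (hconn : (Gamma (A ⧸ Ideal.span {x}) t).Connected) :
    (Gamma A t).Connected := by
  have hmax : (t : ℕ∞) + 1 < (maximalIdeal A).height := by
    have h := maximalIdeal_height_eq_ringKrullDim (R := A)
    rw [hdim] at h
    rw [WithBot.coe_inj.mp h]
    exact_mod_cast (by omega : t + 1 < d)
  have hquot : ∀ p ∈ minimalPrimes A, 1 < ringKrullDim (A ⧸ p) := fun p hp => by
    rw [hequi p hp, hdim]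
    exact_mod_cast (by omega : 1 < d)
  exact hconn.of_surjective_of_adj (minimalPrimeBelow_surjective hxXi hx hquot)
    fun _ _ => minimalPrimeBelow_eq_or_adj hxXi hmax

/-- Let `(A, n)` be an equidimensional complete Noetherian local ring of dimension
`d ≥ 3`, and fix `x ∈ n` lying in no minimal prime of any ideal in `Ξ(A)`.  Then
for any `1 ≤ t ≤ d - 2`, if `Γ_t(A/(x))` is connected, then `Γ_t(A)` is
connected. -/
theorem gamma_connected_of_gamma_quotient_connected
    (A : Type*) [CommRing A] [IsLocalRing A] [IsNoetherianRing A]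
    [IsAdicComplete (maximalIdeal A) A]
    (hequi : IsEquidimensional A) (d : ℕ) (hd : 3 ≤ d)
    (hdim : ringKrullDim A = (d : ℕ))
    (x : A) (hx : x ∈ maximalIdeal A)
    (hxXi : ∀ I ∈ Xi A, ∀ P ∈ I.minimalPrimes, x ∉ P)
    (t : ℕ) (ht : 1 ≤ t) (htd : t ≤ d - 2)
    (hconn : (Gamma (A ⧸ Ideal.span {x}) t).Connected) :
    (Gamma A t).Connected :=
  gamma_connected_of_gamma_quotient_connected_general A hequi d hd hdim x hx hxXi t htd hconn
end
end
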